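/- Let q be odd, squarefree and coprime to det b, and let (ρ, ξ) be any pair satisfying the Weil properties on Sp₈(ℤ/qℤ). Then for all f₁,f₂ : (ℤ/qℤ)⁴ → ℂ and all r ∈ (ℤ/qℤ)*: |T_{f₁,f₂}(r)| = |⟨conj(f₁), ρ(g^{(r)}) f₂⟩|, where g is the symplectic element of Q. -/

import Mathlib

/- STATEMENT 9: exponential sums as matrix coefficients of the Weil representation. -/

open Matrix

noncomputable section

abbrev Msp (R : Type*) := Matrix ((Fin 4) ⊕ (Fin 4)) ((Fin 4) ⊕ (Fin 4)) R

/-- Membership in Sp₈: the block conditions AᵀC = CᵀA, BᵀD = DᵀB, AᵀD − CᵀB = I. -/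
def IsSp8 {R : Type*} [CommRing R] (M : Msp R) : Prop :=
  (M.toBlocks₁₁)ᵀ * M.toBlocks₂₁ = (M.toBlocks₂₁)ᵀ * M.toBlocks₁₁ ∧
  (M.toBlocks₁₂)ᵀ * M.toBlocks₂₂ = (M.toBlocks₂₂)ᵀ * M.toBlocks₁₂ ∧
  (M.toBlocks₁₁)ᵀ * M.toBlocks₂₂ - (M.toBlocks₂₁)ᵀ * M.toBlocks₁₂ = 1

def eZMod (q : ℕ) (t : ZMod q) : ℂ :=
  Complex.exp (2 * Real.pi * Complex.I * (t.val : ℂ) / (q : ℂ))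

/-- The inner product ⟨f₁,f₂⟩ := 𝔼_x f₁(x) conj(f₂(x)) on ℓ²((ℤ/qℤ)⁴). -/
def innerE (q : ℕ) [NeZero q] (f₁ f₂ : (Fin 4 → ZMod q) → ℂ) : ℂ :=
  (∑ x : Fin 4 → ZMod q, f₁ x * (starRingEnd ℂ) (f₂ x)) / (q : ℂ) ^ 4

/-- s(E) := (E 0; 0 E⁻ᵀ). -/
def sMat {R : Type*} [CommRing R] (E : Matrix (Fin 4) (Fin 4) R) : Msp R :=
  fromBlocks E 0 0 (Eᵀ)⁻¹

/-- l(W) := (I 0; W I). -/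
def lMat {R : Type*} [CommRing R] (W : Matrix (Fin 4) (Fin 4) R) : Msp R :=
  fromBlocks 1 0 W 1

/-- J := (0 I; −I 0). -/
def JMat (R : Type*) [CommRing R] : Msp R := fromBlocks 0 1 (-1) 0

/-- The pair (ρ, ξ) satisfies the Weil properties: ρ is (the restriction to Sp₈(ℤ/qℤ) of)
a unitary representation on ℓ²((ℤ/qℤ)⁴), ξ is unimodular, and the dilation / Fourier /
quadratic modulation formulas hold. -/
def WeilPair (q : ℕ) [NeZero q]
    (ρ : Msp (ZMod q) → ((Fin 4 → ZMod q) → ℂ) → ((Fin 4 → ZMod q) → ℂ))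
    (ξ : Msp (ZMod q) → ℂ) : Prop :=
  (∀ M, IsSp8 M → ‖ξ M‖ = 1) ∧
  (∀ M, IsSp8 M → IsLinearMap ℂ (ρ M)) ∧
  (∀ M, IsSp8 M → ∀ f₁ f₂, innerE q (ρ M f₁) (ρ M f₂) = innerE q f₁ f₂) ∧
  (ρ 1 = id) ∧
  (∀ M N, IsSp8 M → IsSp8 N → ρ (M * N) = ρ M ∘ ρ N) ∧
  (∀ E : Matrix (Fin 4) (Fin 4) (ZMod q), IsUnit E.det →
    ∀ f x, ρ (sMat E) f x = ξ (sMat E) * f (E⁻¹ *ᵥ x)) ∧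
  (∀ f x, ρ (JMat (ZMod q)) f x =
    ξ (JMat (ZMod q)) *
      ((q : ℂ) ^ 2 * ((∑ y : Fin 4 → ZMod q, f y * eZMod q (x ⬝ᵥ y)) / (q : ℂ) ^ 4))) ∧
  (∀ W : Matrix (Fin 4) (Fin 4) (ZMod q), Wᵀ = W →
    ∀ f x, ρ (lMat W) f x =
      ξ (lMat W) * eZMod q (-(Ring.inverse (2 : ZMod q) * (x ⬝ᵥ (W *ᵥ x)))) * f x)
/-- The quadratic form Q(x,y) = xᵀax + xᵀby + yᵀcy over a commutative ring. -/
def Qform {R : Type*} [CommRing R] (a b c : Matrix (Fin 4) (Fin 4) R)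
    (x y : Fin 4 → R) : R :=
  x ⬝ᵥ (a *ᵥ x) + x ⬝ᵥ (b *ᵥ y) + y ⬝ᵥ (c *ᵥ y)

/-- T_{f₁,f₂}(r) := q² 𝔼_{x,y ∈ (ℤ/qℤ)⁴} f₁(x) f₂(y) e_q(r Q(x,y)). -/
def Tsum (q : ℕ) [NeZero q] (a b c : Matrix (Fin 4) (Fin 4) ℤ)
    (f₁ f₂ : (Fin 4 → ZMod q) → ℂ) (r : (ZMod q)ˣ) : ℂ :=
  (q : ℂ) ^ 2 * ((∑ x : Fin 4 → ZMod q, ∑ y : Fin 4 → ZMod q,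
    f₁ x * f₂ y * eZMod q ((r : ZMod q) *
      Qform (a.map (Int.cast : ℤ → ZMod q)) (b.map (Int.cast : ℤ → ZMod q))
        (c.map (Int.cast : ℤ → ZMod q)) x y)) / (q : ℂ) ^ 8)

/-- The symplectic element g = (−2b⁻ᵀc, b⁻ᵀ; 4ab⁻ᵀc − b, −2ab⁻ᵀ) of Q, over ℤ/qℤ. -/
def sympEl (q : ℕ) (a b c : Matrix (Fin 4) (Fin 4) ℤ) : Msp (ZMod q) :=
  fromBlocks
    (-(2 : ZMod q) • (((b.map (Int.cast : ℤ → ZMod q))ᵀ)⁻¹ * c.map (Int.cast : ℤ → ZMod q)))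
    (((b.map (Int.cast : ℤ → ZMod q))ᵀ)⁻¹)
    ((4 : ZMod q) • (a.map (Int.cast : ℤ → ZMod q) * ((b.map (Int.cast : ℤ → ZMod q))ᵀ)⁻¹ *
        c.map (Int.cast : ℤ → ZMod q)) - b.map (Int.cast : ℤ → ZMod q))
    (-(2 : ZMod q) • (a.map (Int.cast : ℤ → ZMod q) * ((b.map (Int.cast : ℤ → ZMod q))ᵀ)⁻¹))

/-- The dilate g^{(r)} := (A r⁻¹B; rC D) of a block matrix g = (A B; C D). -/
def dil (q : ℕ) (r : (ZMod q)ˣ) (M : Msp (ZMod q)) : Msp (ZMod q) :=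
  fromBlocks M.toBlocks₁₁ (((r⁻¹ : (ZMod q)ˣ) : ZMod q) • M.toBlocks₁₂)
    ((r : ZMod q) • M.toBlocks₂₁) M.toBlocks₂₂

/-!
The dilated symplectic element of `Q` is a word in the generators of the Weil formulas:
`g^{(r)} = l(-2r a) · s((r bᵀ)⁻¹) · J · l(-2r c)`, which in particular shows `g^{(r)} ∈ Sp₈`.
Applying the formulas to the four factors from right to left gives
`ρ(g^{(r)}) f (x) = Ξ · q² 𝔼_y f(y) e_q(r Q(x, y))`, where `Ξ` is the product of the four values
of `ξ` and so has modulus one. Pairing with `conj f₁` yields `conj (Ξ · T_{f₁,f₂}(r))`.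
-/

section Symplectic

variable {R : Type*} [CommRing R]

lemma isSp8_iff_transpose_mul_JMat_mul (M : Msp R) : IsSp8 M ↔ Mᵀ * JMat R * M = JMat R := by
  rw [← fromBlocks_toBlocks M]
  simp only [IsSp8, toBlocks_fromBlocks₁₁, toBlocks_fromBlocks₁₂, toBlocks_fromBlocks₂₁,
    toBlocks_fromBlocks₂₂, JMat, fromBlocks_transpose, fromBlocks_multiply, Matrix.mul_zero,
    Matrix.mul_one, Matrix.mul_neg, Matrix.neg_mul, zero_add, add_zero, fromBlocks_inj]
  constructor
  · rintro ⟨h₁₁, h₂₂, h₁₂⟩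
    have h₂₁ := congrArg Matrix.transpose h₁₂
    simp only [transpose_sub, transpose_mul, transpose_transpose, transpose_one] at h₂₁
    exact ⟨by rw [h₁₁]; abel, by rw [← h₁₂]; abel, by rw [← h₂₁]; abel, by rw [h₂₂]; abel⟩
  · rintro ⟨h₁₁, h₁₂, -, h₂₂⟩
    exact ⟨(neg_add_eq_zero.mp h₁₁).symm, (neg_add_eq_zero.mp h₂₂).symm, by rw [← h₁₂]; abel⟩

lemma IsSp8.mul {M N : Msp R} (hM : IsSp8 M) (hN : IsSp8 N) : IsSp8 (M * N) := by
  rw [isSp8_iff_transpose_mul_JMat_mul] at *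
  calc (M * N)ᵀ * JMat R * (M * N) = Nᵀ * (Mᵀ * JMat R * M) * N := by
        rw [transpose_mul]; noncomm_ring
    _ = JMat R := by rw [hM, hN]

lemma isSp8_lMat {W : Matrix (Fin 4) (Fin 4) R} (hW : Wᵀ = W) : IsSp8 (lMat W) := by
  refine ⟨?_, ?_, ?_⟩ <;> simp [lMat, hW]

lemma isSp8_sMat {E : Matrix (Fin 4) (Fin 4) R} (hE : IsUnit E.det) : IsSp8 (sMat E) := by
  refine ⟨?_, ?_, ?_⟩ <;> simp [sMat, mul_nonsing_inv _ (isUnit_det_transpose E hE)]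

lemma isSp8_JMat : IsSp8 (JMat R) := by
  refine ⟨?_, ?_, ?_⟩ <;> simp [JMat]

end Symplectic

section UnitsSmul

variable {n R : Type*} [Fintype n] [DecidableEq n] [CommRing R] {B : Matrix n n R}

lemma isUnit_det_units_smul_transpose (hB : IsUnit B.det) (u : Rˣ) :
    IsUnit ((u : R) • Bᵀ).det := by
  rw [det_smul]
  exact (u.isUnit.pow _).mul (isUnit_det_transpose B hB)

lemma inv_units_smul_transpose (hB : IsUnit B.det) (u : Rˣ) :
    ((u : R) • Bᵀ)⁻¹ = ((u⁻¹ : Rˣ) : R) • Bᵀ⁻¹ :=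
  inv_smul' _ u (isUnit_det_transpose B hB)

end UnitsSmul

section Factorization

variable {R : Type*} [CommRing R]

def sympWord (u : Rˣ) (A B C : Matrix (Fin 4) (Fin 4) R) : Msp R :=
  lMat (-(2 * (u : R)) • A) * (sMat ((u : R) • Bᵀ)⁻¹ * (JMat R * lMat (-(2 * (u : R)) • C)))

lemma fromBlocks_eq_sympWord (A B C : Matrix (Fin 4) (Fin 4) R)
    (hB : IsUnit B.det) (u : Rˣ) :
    fromBlocks (-(2 : R) • (Bᵀ⁻¹ * C)) ((u : R) • Bᵀ)⁻¹
        ((u : R) • ((4 : R) • (A * Bᵀ⁻¹ * C) - B)) (-(2 : R) • (A * Bᵀ⁻¹)) =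
      sympWord u A B C := by
  have hinvT : (((u : R) • Bᵀ)⁻¹)ᵀ⁻¹ = (u : R) • B := by
    rw [inv_units_smul_transpose hB, transpose_smul, transpose_nonsing_inv, transpose_transpose]
    exact (inv_smul' _ u⁻¹ (isUnit_nonsing_inv_det B hB)).trans
      (by rw [inv_inv, nonsing_inv_nonsing_inv B hB, Units.smul_def])
  rw [sympWord, sMat, hinvT, inv_units_smul_transpose hB, lMat, lMat, JMat]
  simp only [fromBlocks_multiply, Matrix.mul_zero, Matrix.mul_one, Matrix.zero_mul,
    Matrix.one_mul, Matrix.mul_neg, zero_add, add_zero, Matrix.smul_mul, Matrix.mul_smul,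
    smul_smul, smul_zero, neg_zero]
  have e₁ : -(2 * (u : R)) * ((u⁻¹ : Rˣ) : R) = -2 := by
    linear_combination (-2 : R) * u.mul_inv
  have e₂ : ((u⁻¹ : Rˣ) : R) * -(2 * (u : R)) = -2 := by
    linear_combination (-2 : R) * u.inv_mul
  rw [e₁, e₂, smul_sub, smul_smul, Matrix.mul_assoc, sub_eq_add_neg,
    show (-2 : R) * -(2 * (u : R)) = u * 4 by ring]

lemma isSp8_sympWord {A B C : Matrix (Fin 4) (Fin 4) R} (hA : Aᵀ = A) (hB : IsUnit B.det)
    (hC : Cᵀ = C) (u : Rˣ) : IsSp8 (sympWord u A B C) :=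
  (isSp8_lMat (by rw [transpose_smul, hA])).mul
    ((isSp8_sMat (isUnit_nonsing_inv_det _ (isUnit_det_units_smul_transpose hB u))).mul
      (isSp8_JMat.mul (isSp8_lMat (by rw [transpose_smul, hC]))))

end Factorization

lemma isUnit_two_of_odd {q : ℕ} (hq : Odd q) : IsUnit (2 : ZMod q) := by
  simpa using (ZMod.isUnit_iff_coprime 2 q).mpr (Nat.coprime_two_left.mpr hq)

lemma isUnit_det_map_intCast {n : Type*} [Fintype n] [DecidableEq n] {q : ℕ} {b : Matrix n n ℤ}
    (hb : q.Coprime b.det.natAbs) : IsUnit (b.map (Int.cast : ℤ → ZMod q)).det := by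
  rw [show (b.map (Int.cast : ℤ → ZMod q)).det = (b.det : ZMod q) from
    (RingHom.map_det (Int.castRingHom (ZMod q)) b).symm]
  exact IsUnit.of_mul_eq_one _
    (ZMod.coe_int_mul_inv_eq_one (Int.isCoprime_iff_gcd_eq_one.mpr hb.symm))

lemma dil_sympEl_eq_sympWord {q : ℕ} (a b c : Matrix (Fin 4) (Fin 4) ℤ)
    (hb : IsUnit (b.map (Int.cast : ℤ → ZMod q)).det) (r : (ZMod q)ˣ) :
    dil q r (sympEl q a b c) = sympWord r (a.map Int.cast) (b.map Int.cast) (c.map Int.cast) := by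
  rw [← fromBlocks_eq_sympWord _ _ _ hb, inv_units_smul_transpose hb, dil, sympEl]
  simp only [toBlocks_fromBlocks₁₁, toBlocks_fromBlocks₁₂, toBlocks_fromBlocks₂₁,
    toBlocks_fromBlocks₂₂]

section ExponentialSums

variable {q : ℕ} [NeZero q]

lemma eZMod_eq_stdAddChar (t : ZMod q) : eZMod q t = ZMod.stdAddChar t := by
  rw [ZMod.stdAddChar_apply, ZMod.toCircle_apply]; rfl

lemma eZMod_add (s t : ZMod q) : eZMod q (s + t) = eZMod q s * eZMod q t := by
  simp only [eZMod_eq_stdAddChar, AddChar.map_add_eq_mul]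

lemma eZMod_mul_Qform (u : ZMod q) (A B C : Matrix (Fin 4) (Fin 4) (ZMod q))
    (x y : Fin 4 → ZMod q) :
    eZMod q (u * Qform A B C x y) =
      eZMod q (u * (x ⬝ᵥ (A *ᵥ x))) * eZMod q (u * (x ⬝ᵥ (B *ᵥ y))) *
        eZMod q (u * (y ⬝ᵥ (C *ᵥ y))) := by
  rw [Qform, mul_add, mul_add, eZMod_add, eZMod_add]

lemma innerE_conj_kernel (f₁ f₂ : (Fin 4 → ZMod q) → ℂ)
    (K : (Fin 4 → ZMod q) → (Fin 4 → ZMod q) → ℂ) (Ξ : ℂ) :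
    innerE q (fun x => (starRingEnd ℂ) (f₁ x))
        (fun x => Ξ * ((q : ℂ) ^ 2 * ((∑ y, f₂ y * K x y) / (q : ℂ) ^ 4))) =
      (starRingEnd ℂ) (Ξ * ((q : ℂ) ^ 2 * ((∑ x, ∑ y, f₁ x * f₂ y * K x y) / (q : ℂ) ^ 8))) := by
  have hq : (q : ℂ) ≠ 0 := Nat.cast_ne_zero.mpr (NeZero.ne q)
  simp only [innerE, map_mul, map_div₀, map_sum, map_pow, Complex.conj_natCast, Finset.mul_sum,
    Finset.sum_div]
  refine Finset.sum_congr rfl fun x _ => Finset.sum_congr rfl fun y _ => ?_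
  field_simp

end ExponentialSums

namespace WeilPair

variable {q : ℕ} [NeZero q] {ρ : Msp (ZMod q) → ((Fin 4 → ZMod q) → ℂ) → ((Fin 4 → ZMod q) → ℂ)}
  {ξ : Msp (ZMod q) → ℂ}

lemma norm_eq_one (hW : WeilPair q ρ ξ) {M : Msp (ZMod q)} (hM : IsSp8 M) : ‖ξ M‖ = 1 :=
  hW.1 M hM

lemma apply_mul (hW : WeilPair q ρ ξ) {M N : Msp (ZMod q)} (hM : IsSp8 M) (hN : IsSp8 N)
    (f : (Fin 4 → ZMod q) → ℂ) : ρ (M * N) f = ρ M (ρ N f) := by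
  rw [hW.2.2.2.2.1 M N hM hN, Function.comp_apply]

lemma JMat_apply (hW : WeilPair q ρ ξ) (f : (Fin 4 → ZMod q) → ℂ) (x : Fin 4 → ZMod q) :
    ρ (JMat (ZMod q)) f x =
      ξ (JMat (ZMod q)) * ((q : ℂ) ^ 2 * ((∑ y, f y * eZMod q (x ⬝ᵥ y)) / (q : ℂ) ^ 4)) :=
  hW.2.2.2.2.2.2.1 f x

lemma lMat_neg_two_mul_smul_apply (hW : WeilPair q ρ ξ) (h2 : IsUnit (2 : ZMod q))
    {S : Matrix (Fin 4) (Fin 4) (ZMod q)} (hS : Sᵀ = S) (t : ZMod q) (f : (Fin 4 → ZMod q) → ℂ)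
    (x : Fin 4 → ZMod q) :
    ρ (lMat (-(2 * t) • S)) f x =
      ξ (lMat (-(2 * t) • S)) * eZMod q (t * (x ⬝ᵥ (S *ᵥ x))) * f x := by
  rw [hW.2.2.2.2.2.2.2 _ (by rw [transpose_smul, hS]), smul_mulVec, dotProduct_smul, smul_eq_mul]
  congr 3
  linear_combination (t * (x ⬝ᵥ (S *ᵥ x))) * Ring.inverse_mul_cancel _ h2

lemma sMat_inv_units_smul_transpose_apply (hW : WeilPair q ρ ξ)
    {B : Matrix (Fin 4) (Fin 4) (ZMod q)} (hB : IsUnit B.det) (u : (ZMod q)ˣ)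
    (f : (Fin 4 → ZMod q) → ℂ) (x : Fin 4 → ZMod q) :
    ρ (sMat ((u : ZMod q) • Bᵀ)⁻¹) f x =
      ξ (sMat ((u : ZMod q) • Bᵀ)⁻¹) * f (((u : ZMod q) • Bᵀ) *ᵥ x) := by
  have hdet := isUnit_det_units_smul_transpose hB u
  rw [hW.2.2.2.2.2.1 _ (isUnit_nonsing_inv_det _ hdet), nonsing_inv_nonsing_inv _ hdet]

lemma exists_norm_eq_one_apply_sympWord (hW : WeilPair q ρ ξ) (h2 : IsUnit (2 : ZMod q))
    {A B C : Matrix (Fin 4) (Fin 4) (ZMod q)} (hA : Aᵀ = A) (hB : IsUnit B.det) (hC : Cᵀ = C)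
    (u : (ZMod q)ˣ) :
    ∃ Ξ : ℂ, ‖Ξ‖ = 1 ∧ ∀ f x,
      ρ (sympWord u A B C) f x =
        Ξ * ((q : ℂ) ^ 2 * ((∑ y, f y * eZMod q (u * Qform A B C x y)) / (q : ℂ) ^ 4)) := by
  have hspA : IsSp8 (lMat (-(2 * (u : ZMod q)) • A)) :=
    isSp8_lMat (by rw [transpose_smul, hA])
  have hspB : IsSp8 (sMat ((u : ZMod q) • Bᵀ)⁻¹) :=
    isSp8_sMat (isUnit_nonsing_inv_det _ (isUnit_det_units_smul_transpose hB u))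
  have hspC : IsSp8 (lMat (-(2 * (u : ZMod q)) • C)) :=
    isSp8_lMat (by rw [transpose_smul, hC])
  have hphase (x y : Fin 4 → ZMod q) :
      (((u : ZMod q) • Bᵀ) *ᵥ x) ⬝ᵥ y = u * (x ⬝ᵥ (B *ᵥ y)) := by
    rw [smul_mulVec, smul_dotProduct, smul_eq_mul, mulVec_transpose, ← dotProduct_mulVec]
  refine ⟨ξ (lMat (-(2 * (u : ZMod q)) • A)) * ξ (sMat ((u : ZMod q) • Bᵀ)⁻¹) *
      ξ (JMat (ZMod q)) * ξ (lMat (-(2 * (u : ZMod q)) • C)), ?_, fun f x => ?_⟩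
  · simp only [norm_mul, hW.norm_eq_one hspA, hW.norm_eq_one hspB, hW.norm_eq_one isSp8_JMat,
      hW.norm_eq_one hspC, mul_one]
  rw [sympWord, hW.apply_mul hspA (hspB.mul (isSp8_JMat.mul hspC)),
    hW.apply_mul hspB (isSp8_JMat.mul hspC), hW.apply_mul isSp8_JMat hspC,
    hW.lMat_neg_two_mul_smul_apply h2 hA, hW.sMat_inv_units_smul_transpose_apply hB,
    hW.JMat_apply]
  simp only [hW.lMat_neg_two_mul_smul_apply h2 hC, hphase, eZMod_mul_Qform, Finset.mul_sum,
    Finset.sum_div]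
  refine Finset.sum_congr rfl fun y _ => ?_
  ring

end WeilPair

theorem stmt9_general (a b c : Matrix (Fin 4) (Fin 4) ℤ) (ha : aᵀ = a) (hc : cᵀ = c)
    (q : ℕ) [NeZero q] (hodd : Odd q)
    (hco : Nat.Coprime q b.det.natAbs) :
    (∀ r : (ZMod q)ˣ, IsSp8 (dil q r (sympEl q a b c))) ∧
    ∀ ρ ξ, WeilPair q ρ ξ →
      ∀ (f₁ f₂ : (Fin 4 → ZMod q) → ℂ) (r : (ZMod q)ˣ),
        ‖Tsum q a b c f₁ f₂ r‖ =
          ‖innerE q (fun x => (starRingEnd ℂ) (f₁ x))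
            (ρ (dil q r (sympEl q a b c)) f₂)‖ := by
  have hB := isUnit_det_map_intCast (q := q) hco
  have hA : (a.map (Int.cast : ℤ → ZMod q))ᵀ = a.map Int.cast := by rw [← transpose_map, ha]
  have hC : (c.map (Int.cast : ℤ → ZMod q))ᵀ = c.map Int.cast := by rw [← transpose_map, hc]
  refine ⟨fun r => ?_, fun ρ ξ hW f₁ f₂ r => ?_⟩
  · rw [dil_sympEl_eq_sympWord a b c hB]
    exact isSp8_sympWord hA hB hC r
  · obtain ⟨Ξ, hΞ, hρ⟩ := hW.exists_norm_eq_one_apply_sympWord (isUnit_two_of_odd hodd) hA hB hC r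
    rw [dil_sympEl_eq_sympWord a b c hB, funext (hρ f₂), innerE_conj_kernel, Complex.norm_conj,
      norm_mul, hΞ, one_mul, Tsum]

theorem stmt9 (a b c : Matrix (Fin 4) (Fin 4) ℤ) (ha : aᵀ = a) (hc : cᵀ = c)
    (hb : b.det ≠ 0) (q : ℕ) [NeZero q] (hodd : Odd q) (hsf : Squarefree q)
    (hco : Nat.Coprime q b.det.natAbs) :
    (∀ r : (ZMod q)ˣ, IsSp8 (dil q r (sympEl q a b c))) ∧
    ∀ ρ ξ, WeilPair q ρ ξ →
      ∀ (f₁ f₂ : (Fin 4 → ZMod q) → ℂ) (r : (ZMod q)ˣ),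
        ‖Tsum q a b c f₁ f₂ r‖ =
          ‖innerE q (fun x => (starRingEnd ℂ) (f₁ x))
            (ρ (dil q r (sympEl q a b c)) f₂)‖ :=
  stmt9_general a b c ha hc q hodd hco
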